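/- arXiv:1302.4415 — 3 statements merged into one kernel-verified Lean document; each statement's English description precedes it below -/
import Mathlib

section
/- Let A be a V×V matrix over a field and let X ⊆ V be such that A[X] is nonsingular. Then for all Y ⊆ V, det((A*X)[Y]) = det(A[X △ Y]) / det(A[X]), where △ denotes symmetric difference. In particular, (A*X)[Y] is nonsingular if and only if A[X △ Y] is nonsingular. -/
open scoped symmDiff

variable {V : Type} [Fintype V] [DecidableEq V] {F : Type} [Field F]

/-- principal submatrix of `A` indexed by `X` -/
def pSub (A : Matrix V V F) (X : Finset V) : Matrix X X F :=
  Matrix.of fun i j => A i.1 j.1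

/-- principal pivot transform of `A` on `X` -/
noncomputable def ppt (A : Matrix V V F) (X : Finset V) : Matrix V V F :=
  let P : Matrix X X F := Matrix.of fun i j => A i.1 j.1
  let Q : Matrix X {a // a ∉ X} F := Matrix.of fun i j => A i.1 j.1
  let R : Matrix {a // a ∉ X} X F := Matrix.of fun i j => A i.1 j.1
  let S : Matrix {a // a ∉ X} {a // a ∉ X} F := Matrix.of fun i j => A i.1 j.1
  fun i j =>
    if hi : i ∈ X then
      if hj : j ∈ X then P⁻¹ ⟨i, hi⟩ ⟨j, hj⟩
      else (-(P⁻¹ * Q)) ⟨i, hi⟩ ⟨j, hj⟩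
    else
      if hj : j ∈ X then (R * P⁻¹) ⟨i, hi⟩ ⟨j, hj⟩
      else (S - R * P⁻¹ * Q) ⟨i, hi⟩ ⟨j, hj⟩

/-!
Let `rowMix M Z` keep the rows of `M` indexed by `Z` and replace the others by rows of the
identity, so that its determinant is the principal minor `det M[Z]`. In block form the pivot
satisfies `(A*X) · rowMix A X = rowMix A Xᶜ`: multiplying by `[[P, Q], [0, 1]]` turns
`A*X` back into `[[1, 0], [R, S]]`. Hence taking the rows of `A*X` on `Y` (identity rows
elsewhere) and multiplying by `rowMix A X` yields the rows of `A` exactly on `X ∆ Y`, and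
multiplicativity of the determinant gives `det (A*X)[Y] · det A[X] = det A[X ∆ Y]`.
-/

open Matrix

section Pivot

variable {m n R : Type*} [Fintype m] [DecidableEq m] [Fintype n] [DecidableEq n] [CommRing R]

noncomputable def Matrix.blockPivot (B : Matrix (m ⊕ n) (m ⊕ n) R) : Matrix (m ⊕ n) (m ⊕ n) R :=
  fromBlocks B.toBlocks₁₁⁻¹ (-(B.toBlocks₁₁⁻¹ * B.toBlocks₁₂)) (B.toBlocks₂₁ * B.toBlocks₁₁⁻¹)
    (B.toBlocks₂₂ - B.toBlocks₂₁ * B.toBlocks₁₁⁻¹ * B.toBlocks₁₂)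

theorem Matrix.blockPivot_mul_fromBlocks (B : Matrix (m ⊕ n) (m ⊕ n) R)
    (hB : IsUnit B.toBlocks₁₁.det) :
    B.blockPivot * fromBlocks B.toBlocks₁₁ B.toBlocks₁₂ 0 1 =
      fromBlocks 1 0 B.toBlocks₂₁ B.toBlocks₂₂ := by
  simp [blockPivot, fromBlocks_multiply, Matrix.mul_assoc, nonsing_inv_mul _ hB]

end Pivot

section RowMix

variable {ι α : Type*} [DecidableEq ι]

abbrev blockForm (M : Matrix ι ι α) (Z : Finset ι) :
    Matrix (Z ⊕ {a // a ∉ Z}) (Z ⊕ {a // a ∉ Z}) α :=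
  M.submatrix (Equiv.sumCompl (· ∈ Z)) (Equiv.sumCompl (· ∈ Z))

def rowMix [Zero α] [One α] (M : Matrix ι ι α) (Z : Finset ι) : Matrix ι ι α :=
  Matrix.of fun i j => if i ∈ Z then M i j else if i = j then 1 else 0

theorem blockForm_rowMix [Zero α] [One α] (M : Matrix ι ι α) (Z : Finset ι) :
    blockForm (rowMix M Z) Z =
      fromBlocks (blockForm M Z).toBlocks₁₁ (blockForm M Z).toBlocks₁₂ 0 1 := by
  ext (i | i) (j | j)
  · simp [rowMix, toBlocks₁₁, i.2]
  · simp [rowMix, toBlocks₁₂, i.2]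
  · simp [rowMix, i.2, (ne_of_mem_of_not_mem j.2 i.2).symm]
  · simp [rowMix, i.2, one_apply, Subtype.ext_iff]

theorem blockForm_rowMix_compl [Fintype ι] [Zero α] [One α] (M : Matrix ι ι α) (Z : Finset ι) :
    blockForm (rowMix M Zᶜ) Z =
      fromBlocks 1 0 (blockForm M Z).toBlocks₂₁ (blockForm M Z).toBlocks₂₂ := by
  ext (i | i) (j | j)
  · simp [rowMix, i.2, one_apply]
  · simp [rowMix, i.2, ne_of_mem_of_not_mem i.2 j.2]
  · simp [rowMix, toBlocks₂₁, i.2]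
  · have hi : (i : ι) ∉ Z := i.2
    simp [rowMix, toBlocks₂₂, hi]

end RowMix

omit [Fintype V] in
theorem ppt_blockForm (A : Matrix V V F) (X : Finset V) :
    blockForm (ppt A X) X = (blockForm A X).blockPivot := by
  ext (i | i) (j | j) <;>
    simp only [blockForm, submatrix_apply, Equiv.sumCompl_apply_inl, Equiv.sumCompl_apply_inr] <;>
    simp only [ppt, blockPivot, i.2, j.2, dite_true, dite_false] <;> rfl

theorem det_rowMix (M : Matrix V V F) (Z : Finset V) :
    (rowMix M Z).det = (pSub M Z).det := by
  calc (rowMix M Z).det = (blockForm (rowMix M Z) Z).det := (det_submatrix_equiv_self _ _).symm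
    _ = (pSub M Z).det := by rw [blockForm_rowMix, det_fromBlocks_zero₂₁, det_one, mul_one]; rfl

section RowMixMul

variable {ι α : Type*} [Fintype ι] [DecidableEq ι] [Semiring α]

theorem rowMix_mul_apply_of_mem {M N : Matrix ι ι α} {Y : Finset ι} {i : ι} (hi : i ∈ Y)
    (j : ι) : (rowMix M Y * N) i j = (M * N) i j := by
  simp [mul_apply, rowMix, hi]

theorem rowMix_mul_apply_of_notMem {M N : Matrix ι ι α} {Y : Finset ι} {i : ι} (hi : i ∉ Y)
    (j : ι) : (rowMix M Y * N) i j = N i j := by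
  simp [mul_apply, rowMix, hi]

theorem rowMix_mul_rowMix_of_mul_eq {M N : Matrix ι ι α} {X : Finset ι}
    (h : M * rowMix N X = rowMix N Xᶜ) (Y : Finset ι) :
    rowMix M Y * rowMix N X = rowMix N (X ∆ Y) := by
  ext i j
  by_cases hiY : i ∈ Y
  · rw [rowMix_mul_apply_of_mem hiY, h]
    by_cases hiX : i ∈ X <;> simp [rowMix, Finset.mem_symmDiff, hiX, hiY]
  · rw [rowMix_mul_apply_of_notMem hiY]
    by_cases hiX : i ∈ X <;> simp [rowMix, Finset.mem_symmDiff, hiX, hiY]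

end RowMixMul

theorem ppt_mul_rowMix (A : Matrix V V F) (X : Finset V) (hX : (pSub A X).det ≠ 0) :
    ppt A X * rowMix A X = rowMix A Xᶜ := by
  let e : X ⊕ {a // a ∉ X} ≃ V := Equiv.sumCompl (· ∈ X)
  apply (reindex e.symm e.symm).injective
  simp only [reindex_apply, Equiv.symm_symm]
  rw [← submatrix_mul_equiv _ _ _ e]
  change blockForm (ppt A X) X * blockForm (rowMix A X) X = blockForm (rowMix A Xᶜ) X
  rw [ppt_blockForm, blockForm_rowMix, blockForm_rowMix_compl]
  exact blockPivot_mul_fromBlocks _ (isUnit_iff_ne_zero.2 hX)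

/-- Tucker: det((A*X)[Y]) = det(A[X △ Y]) / det(A[X]); in
particular (A*X)[Y] is nonsingular iff A[X △ Y] is nonsingular. -/
theorem ppt_principal_minor (A : Matrix V V F) (X : Finset V)
    (hX : (pSub A X).det ≠ 0) (Y : Finset V) :
    (pSub (ppt A X) Y).det = (pSub A (X ∆ Y)).det / (pSub A X).det ∧
      ((pSub (ppt A X) Y).det ≠ 0 ↔ (pSub A (X ∆ Y)).det ≠ 0) := by
  have hmul : (pSub (ppt A X) Y).det * (pSub A X).det = (pSub A (X ∆ Y)).det := by
    rw [← det_rowMix, ← det_rowMix, ← det_mul,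
      rowMix_mul_rowMix_of_mul_eq (ppt_mul_rowMix A X hX), det_rowMix]
  have hdiv := (eq_div_iff hX).2 hmul
  exact ⟨hdiv, by simp [hdiv, hX]⟩
end

section
/- Let M = (V,E) be a set system and let ∂ denote the dual pivot (∂u = +u*u+u). Then X ∈ M∂V if and only if the number of sets Z ∈ E with X ⊆ Z is odd. In particular, ∅ ∈ M∂V if and only if |E| is odd. -/
open scoped symmDiff

variable {V : Type} [Fintype V] [DecidableEq V]

/-- pivot (twist) of a set system on `X` -/
def pivotOp (E : Finset (Finset V)) (X : Finset V) : Finset (Finset V) :=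
  E.image (fun Y => Y ∆ X)

/-- loop complementation of a set system on `u` -/
def loopC (E : Finset (Finset V)) (u : V) : Finset (Finset V) :=
  E ∆ ((E.filter (fun Y => u ∉ Y)).image (fun Y => insert u Y))

/-- the dual pivot ∂u = +u *u +u -/
def dualPivot (E : Finset (Finset V)) (u : V) : Finset (Finset V) :=
  loopC (pivotOp (loopC E u) {u}) u

/-!
Over `𝔽₂`, identify a set system with the indicator function `f` of its set of sets. Loop
complementation `+u` adds `f (Z \ {u})` to `f Z` when `u ∈ Z`, and pivot `*u` translates the
argument by `{u}`; together, `∂u` keeps `f Z` for `u ∈ Z` and replaces it by `f Z + f (Z ∪ {u})`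
for `u ∉ Z`. So `∂u` is the `u`-th coordinate step of the superset-sum (zeta) transform on the
subset lattice, and applying it once for every `u ∈ V` yields `X ↦ ∑_{Z ⊇ X} f Z`.
-/

open Finset

omit [Fintype V] in
theorem mem_pivotOp {E : Finset (Finset V)} {X Z : Finset V} :
    Z ∈ pivotOp E X ↔ Z ∆ X ∈ E := by
  simp only [pivotOp, mem_image]
  exact ⟨by rintro ⟨Y, hY, rfl⟩; rwa [symmDiff_symmDiff_cancel_right],
    fun h => ⟨Z ∆ X, h, symmDiff_symmDiff_cancel_right _ _⟩⟩

omit [Fintype V] in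
theorem mem_image_insert_filter_notMem {E : Finset (Finset V)} {u : V} {Z : Finset V} :
    Z ∈ (E.filter (fun Y => u ∉ Y)).image (fun Y => insert u Y) ↔ u ∈ Z ∧ Z.erase u ∈ E := by
  simp only [mem_image, mem_filter]
  constructor
  · rintro ⟨Y, ⟨hY, huY⟩, rfl⟩
    exact ⟨mem_insert_self u Y, by rwa [erase_insert huY]⟩
  · rintro ⟨huZ, hZ⟩
    exact ⟨Z.erase u, ⟨hZ, notMem_erase u Z⟩, insert_erase huZ⟩

omit [Fintype V] in
theorem symmDiff_singleton_of_mem {Z : Finset V} {u : V} (hu : u ∈ Z) :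
    Z ∆ {u} = Z.erase u := by
  rw [symmDiff_of_ge (singleton_subset_iff.2 hu), sdiff_singleton_eq_erase]

omit [Fintype V] in
theorem symmDiff_singleton_of_notMem {Z : Finset V} {u : V} (hu : u ∉ Z) :
    Z ∆ {u} = insert u Z := by
  rw [(disjoint_singleton_right.2 hu).symmDiff_eq_sup, sup_eq_union, union_comm, ← insert_eq]

def zmod2Indicator (E : Finset (Finset V)) (Z : Finset V) : ZMod 2 :=
  if Z ∈ E then 1 else 0

omit [Fintype V] in
theorem zmod2Indicator_eq_one_iff {E : Finset (Finset V)} {Z : Finset V} :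
    zmod2Indicator E Z = 1 ↔ Z ∈ E := by
  unfold zmod2Indicator
  split_ifs with h <;> simp [h]

omit [Fintype V] in
theorem zmod2Indicator_symmDiff (E F : Finset (Finset V)) (Z : Finset V) :
    zmod2Indicator (E ∆ F) Z = zmod2Indicator E Z + zmod2Indicator F Z := by
  unfold zmod2Indicator
  by_cases hE : Z ∈ E <;> by_cases hF : Z ∈ F <;> simp [mem_symmDiff, hE, hF]
  decide

omit [Fintype V] in
theorem zmod2Indicator_pivotOp (E : Finset (Finset V)) (X Z : Finset V) :
    zmod2Indicator (pivotOp E X) Z = zmod2Indicator E (Z ∆ X) := by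
  simp only [zmod2Indicator, mem_pivotOp]

omit [Fintype V] in
theorem zmod2Indicator_loopC (E : Finset (Finset V)) (u : V) (Z : Finset V) :
    zmod2Indicator (loopC E u) Z =
      if u ∈ Z then zmod2Indicator E Z + zmod2Indicator E (Z.erase u)
      else zmod2Indicator E Z := by
  rw [loopC, zmod2Indicator_symmDiff]
  split_ifs with hu <;>
    simp only [zmod2Indicator, mem_image_insert_filter_notMem, hu, true_and, false_and,
      if_false, add_zero]

/-- One coordinate step of the superset-sum (zeta) transform on the subset lattice. -/
def zetaStep {M : Type*} [AddCommMonoid M] (f : Finset V → M) (u : V) (Z : Finset V) : M :=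
  if u ∈ Z then f Z else f Z + f (insert u Z)

omit [Fintype V] in
theorem zmod2Indicator_dualPivot (E : Finset (Finset V)) (u : V) :
    zmod2Indicator (dualPivot E u) = zetaStep (zmod2Indicator E) u := by
  funext Z
  rw [dualPivot, zmod2Indicator_loopC, zetaStep]
  by_cases hu : u ∈ Z
  · rw [if_pos hu, if_pos hu, zmod2Indicator_pivotOp, zmod2Indicator_pivotOp,
      symmDiff_singleton_of_mem hu, symmDiff_singleton_of_notMem (notMem_erase u Z),
      insert_erase hu, zmod2Indicator_loopC, zmod2Indicator_loopC, if_neg (notMem_erase u Z),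
      if_pos hu, add_comm, add_assoc, CharTwo.add_self_eq_zero, add_zero]
  · rw [if_neg hu, if_neg hu, zmod2Indicator_pivotOp, symmDiff_singleton_of_notMem hu,
      zmod2Indicator_loopC, if_pos (mem_insert_self u Z), erase_insert hu, add_comm]

omit [Fintype V] in
theorem zmod2Indicator_foldl_dualPivot (E : Finset (Finset V)) (l : List V) :
    zmod2Indicator (l.foldl dualPivot E) = l.foldl zetaStep (zmod2Indicator E) :=
  (List.foldl_hom zmod2Indicator fun E u => (zmod2Indicator_dualPivot E u).symm).symm

omit [Fintype V] in
theorem foldl_zetaStep {M : Type*} [AddCommMonoid M] (f : Finset V → M) {l : List V}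
    (hl : l.Nodup) (X : Finset V) :
    l.foldl zetaStep f X = ∑ T ∈ (l.toFinset \ X).powerset, f (X ∪ T) := by
  induction l generalizing f with
  | nil => simp
  | cons u l ih =>
    obtain ⟨hul, hl⟩ := List.nodup_cons.1 hl
    rw [List.foldl_cons, ih _ hl, List.toFinset_cons]
    by_cases huX : u ∈ X
    · rw [insert_sdiff_of_mem _ huX]
      refine sum_congr rfl fun T _ => ?_
      rw [zetaStep, if_pos (mem_union_left T huX)]
    · have hu : u ∉ l.toFinset \ X := fun h => hul (List.mem_toFinset.1 (mem_sdiff.1 h).1)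
      rw [insert_sdiff_of_notMem _ huX, sum_powerset_insert hu, ← sum_add_distrib]
      refine sum_congr rfl fun T hT => ?_
      have huT : u ∉ X ∪ T := by
        simpa [huX] using fun h => hu (mem_powerset.1 hT h)
      rw [zetaStep, if_neg huT, union_insert]

omit [Fintype V] in
theorem sum_powerset_sdiff_union_eq_sum_Icc {M : Type*} [AddCommMonoid M] (f : Finset V → M)
    {X S : Finset V} (hXS : X ⊆ S) : ∑ T ∈ (S \ X).powerset, f (X ∪ T) = ∑ Z ∈ Icc X S, f Z := by
  rw [Icc_eq_image_powerset hXS, sum_image]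
  intro T₁ hT₁ T₂ hT₂ h
  rw [← union_sdiff_cancel_left (disjoint_sdiff.mono_right (mem_powerset.1 hT₁)),
    ← union_sdiff_cancel_left (disjoint_sdiff.mono_right (mem_powerset.1 hT₂))]
  exact congrArg (· \ X) h

/-- X ∈ M∂V iff the number of Z ∈ E with X ⊆ Z is odd; in
particular ∅ ∈ M∂V iff |E| is odd. -/
theorem mem_dualPivot_univ_iff (E : Finset (Finset V))
    (l : List V) (hnd : l.Nodup) (huniv : l.toFinset = Finset.univ) :
    (∀ X : Finset V,
      X ∈ l.foldl dualPivot E ↔ Odd (E.filter (fun Z => X ⊆ Z)).card) ∧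
    (∅ ∈ l.foldl dualPivot E ↔ Odd E.card) := by
  have key (X : Finset V) :
      X ∈ l.foldl dualPivot E ↔ Odd (E.filter (fun Z => X ⊆ Z)).card := by
    rw [← zmod2Indicator_eq_one_iff, zmod2Indicator_foldl_dualPivot, foldl_zetaStep _ hnd, huniv,
      sum_powerset_sdiff_union_eq_sum_Icc _ (subset_univ X), ← ZMod.natCast_eq_one_iff_odd]
    simp only [zmod2Indicator, sum_boole]
    congr! 3
    ext Z
    simp [and_comm]
  refine ⟨key, ?_⟩
  rw [key, filter_true_of_mem fun _ _ => empty_subset _]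
end

section
/- Let F be a field of characteristic 2, let A be a principally unimodular V×V matrix over F, and let j ∈ V. Then for every Z ⊆ V with j ∈ Z, det((A + I_{j})[Z]) = det(A[Z]) + det(A[Z \ {j}]), where A + I_{j} is A with 1 added to the (j,j) entry; consequently M_{A+I_j} = M_A + j, i.e., for all Z ⊆ V, (A+I_j)[Z] is nonsingular iff Z is in the loop complementation at j of the set system M_A. -/
/-!
Adding `c` to the entry `(j, j)` changes only row `j` of every principal submatrix `A[Z]` with
`j ∈ Z`, so by linearity of the determinant in that row
`det (A + c I_j)[Z] = det A[Z] + c · det A[Z \ {j}]`, the second term being the determinant with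
row `j` replaced by a unit vector. Over characteristic 2 principal unimodularity means that every
principal minor is `0` or `1`; as `1 + 1 = 0`, for `c = 1` the left side is nonzero exactly when
exactly one of the two minors on the right is, which is membership of `Z` in `M_A + j`.
-/

open Matrix
open scoped symmDiff

variable {V : Type} [Fintype V] [DecidableEq V] {F : Type} [Field F]

open scoped Classical in
/-- the set system of index sets of nonsingular principal submatrices of A -/
noncomputable def MA (A : Matrix V V F) : Finset (Finset V) :=
  Finset.univ.filter (fun X => (pSub A X).det ≠ 0)

/-- A is principally unimodular: all principal minors lie in {0,1,−1} -/
def PU (A : Matrix V V F) : Prop :=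
  ∀ Y : Finset V, (pSub A Y).det ∈ ({0, 1, -1} : Set F)

namespace Matrix

variable {n R : Type*} [Fintype n] [DecidableEq n] [CommRing R]

theorem det_updateRow_single_self (M : Matrix n n R) (i : n) :
    (M.updateRow i (Pi.single i 1)).det =
      (M.submatrix ((↑) : {x // x ≠ i} → n) (↑)).det := by
  have : Subsingleton {x // ¬x ≠ i} :=
    ⟨fun a b => Subtype.ext ((of_not_not a.2).trans (of_not_not b.2).symm)⟩
  rw [twoBlockTriangular_det _ (· ≠ i) fun x hx y hy => by simp [of_not_not hx, hy],
    det_eq_elem_of_subsingleton (toSquareBlockProp _ fun x => ¬x ≠ i) ⟨i, not_not.2 rfl⟩]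
  simp only [toSquareBlockProp, toBlock, submatrix_apply, updateRow_self, Pi.single_eq_same,
    mul_one]
  congr 1
  ext x y
  simp [x.2]

theorem det_add_single_self (M : Matrix n n R) (i : n) (c : R) :
    (M + single i i c).det =
      M.det + c * (M.submatrix ((↑) : {x // x ≠ i} → n) (↑)).det := by
  have hrow : M + single i i c = M.updateRow i (M i + c • Pi.single i 1) := by
    ext x y
    rcases eq_or_ne x i with rfl | hx
    · simp [single_apply, Pi.single_apply, eq_comm]
    · simp [hx.symm, hx]
  rw [hrow, det_updateRow_add, updateRow_eq_self, det_updateRow_smul, det_updateRow_single_self]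

end Matrix

theorem CharTwo.add_ne_zero_iff_xor {R : Type*} [Ring R] [CharP R 2] {a b : R}
    (ha : a = 0 ∨ a = 1) (hb : b = 0 ∨ b = 1) : a + b ≠ 0 ↔ Xor (a ≠ 0) (b ≠ 0) := by
  have : Nontrivial R := CharP.nontrivial_of_char_ne_one (R := R) (v := 2) (by decide)
  rcases ha with rfl | rfl <;> rcases hb with rfl | rfl <;> simp [CharTwo.add_self_eq_zero]

omit [Fintype V] in
theorem mem_loopC_iff (E : Finset (Finset V)) (u : V) (Z : Finset V) :
    Z ∈ loopC E u ↔ Xor (Z ∈ E) (u ∈ Z ∧ Z.erase u ∈ E) := by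
  suffices h : Z ∈ (E.filter (u ∉ ·)).image (insert u) ↔ u ∈ Z ∧ Z.erase u ∈ E by
    rw [loopC, Finset.mem_symmDiff, h]; rfl
  simp only [Finset.mem_image, Finset.mem_filter]
  constructor
  · rintro ⟨Y, hY, rfl⟩
    exact ⟨Finset.mem_insert_self u Y, by rw [Finset.erase_insert hY.2]; exact hY.1⟩
  · rintro ⟨hu, hZ⟩
    exact ⟨Z.erase u, ⟨hZ, Finset.notMem_erase u Z⟩, Finset.insert_erase hu⟩

theorem mem_MA_iff (A : Matrix V V F) (X : Finset V) : X ∈ MA A ↔ (pSub A X).det ≠ 0 := by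
  simp [MA]

omit [Fintype V] in
theorem PU.det_eq_zero_or_one [CharP F 2] {A : Matrix V V F} (hA : PU A) (Y : Finset V) :
    (pSub A Y).det = 0 ∨ (pSub A Y).det = 1 := by
  simpa [CharTwo.neg_eq] using hA Y

omit [Fintype V] [DecidableEq V] in
theorem pSub_add (A B : Matrix V V F) (X : Finset V) : pSub (A + B) X = pSub A X + pSub B X :=
  rfl

omit [Fintype V] in
theorem pSub_single_of_mem {j : V} {X : Finset V} (hj : j ∈ X) (c : F) :
    pSub (single j j c) X = single ⟨j, hj⟩ ⟨j, hj⟩ c := by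
  ext x y
  simp [pSub, single_apply, Subtype.ext_iff, eq_comm]

omit [Fintype V] in
theorem pSub_single_of_notMem {j : V} {X : Finset V} (hj : j ∉ X) (c : F) :
    pSub (single j j c) X = 0 := by
  ext x y
  have : x.1 ≠ j := fun h => hj (h ▸ x.2)
  simp [pSub, single_apply, this.symm]

omit [Fintype V] in
theorem det_pSub_erase (A : Matrix V V F) {j : V} {X : Finset V} (hj : j ∈ X) :
    (pSub A (X.erase j)).det =
      ((pSub A X).submatrix ((↑) : {x // x ≠ (⟨j, hj⟩ : X)} → X) (↑)).det := by
  let e : {x // x ≠ (⟨j, hj⟩ : X)} ≃ X.erase j :=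
    { toFun := fun x => ⟨x.1, Finset.mem_erase.2 ⟨fun h => x.2 (Subtype.ext h), x.1.2⟩⟩
      invFun := fun y => ⟨⟨y, Finset.mem_of_mem_erase y.2⟩,
        fun h => (Finset.mem_erase.1 y.2).1 (congrArg Subtype.val h)⟩
      left_inv := fun _ => rfl
      right_inv := fun _ => rfl }
  exact (det_submatrix_equiv_self e _).symm

omit [Fintype V] in
theorem det_pSub_add_single (A : Matrix V V F) {j : V} {X : Finset V} (hj : j ∈ X) (c : F) :
    (pSub (A + single j j c) X).det = (pSub A X).det + c * (pSub A (X.erase j)).det := by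
  rw [pSub_add, pSub_single_of_mem hj, det_add_single_self, det_pSub_erase A hj]

/-- over a field of characteristic 2, for a principally
unimodular A and j ∈ V: the principal minors of A + I_j indexed by sets Z
containing j satisfy a Laplace-expansion identity, and consequently
M_(A+I_j) = M_A + j. -/
theorem pu_loopC_single [CharP F 2] (A : Matrix V V F) (hPU : PU A) (j : V) :
    (∀ Z : Finset V, j ∈ Z →
      (pSub (A + Matrix.single j j 1) Z).det =
        (pSub A Z).det + (pSub A (Z.erase j)).det) ∧
    MA (A + Matrix.single j j 1) = loopC (MA A) j := by
  refine ⟨fun Z hj => by simpa using det_pSub_add_single A hj 1, Finset.ext fun Z => ?_⟩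
  rw [mem_MA_iff, mem_loopC_iff, mem_MA_iff, mem_MA_iff]
  by_cases hj : j ∈ Z
  · rw [det_pSub_add_single A hj 1, one_mul, CharTwo.add_ne_zero_iff_xor
      (hPU.det_eq_zero_or_one Z) (hPU.det_eq_zero_or_one _)]
    simp [hj]
  · simp [hj, pSub_add, pSub_single_of_notMem hj]
end
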